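/- arXiv:2605.18276 — 2 statements merged into one kernel-verified Lean document; each statement's English description precedes it below -/
import Mathlib

section
/- Suppose sequences (L_n, R_n) → (L, R) and (L_n Diag(z̄_n), R_n Diag(z_n⁻¹)) → (L', R') in (ℂ^{p×r})², where all pairs are bi-orthogonal (L*R = I_r etc.) and z_n ∈ (ℂ*)^r. Then the sequence (z_n) is bounded and bounded away from zero, and hence admits a convergent subsequence in (ℂ*)^r. -/
open Matrix Filter Topology

/-!
Bi-orthogonality turns the two transformed sequences into the scalings themselves:
`(Lₙ Diag(z̄ₙ))ᴴ Rₙ = Diag(zₙ)` and `Lₙᴴ (Rₙ Diag(zₙ⁻¹)) = Diag(zₙ⁻¹)`. Passing to the limit,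
`zₙ → diag(L'ᴴ R)` and `zₙ⁻¹ → diag(Lᴴ R')`, so both `zₙ` and `zₙ⁻¹` are bounded and the
limit of `zₙ` is invertible; no subsequence is needed.
-/

theorem Filter.Tendsto.matrix_conjTranspose_mul {α R : Type*} {m n k : Type*} [Fintype m]
    [TopologicalSpace R] [NonUnitalNonAssocSemiring R] [StarRing R] [ContinuousStar R]
    [ContinuousAdd R] [ContinuousMul R] {l : Filter α} {A : α → Matrix m n R}
    {B : α → Matrix m k R} {A₀ : Matrix m n R} {B₀ : Matrix m k R}
    (hA : Tendsto A l (𝓝 A₀)) (hB : Tendsto B l (𝓝 B₀)) :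
    Tendsto (fun x => (A x)ᴴ * B x) l (𝓝 (A₀ᴴ * B₀)) :=
  Tendsto.comp (f := fun x => (A x, B x))
    (g := fun P : Matrix m n R × Matrix m k R => P.1ᴴ * P.2)
    ((continuous_fst.matrix_conjTranspose.matrix_mul continuous_snd).tendsto (A₀, B₀))
    (hA.prodMk_nhds hB)

theorem Filter.Tendsto.of_matrix_diagonal {α R n : Type*} [DecidableEq n] [TopologicalSpace R]
    [Zero R] {l : Filter α} {d : α → n → R} {M : Matrix n n R}
    (h : Tendsto (fun x => diagonal (d x)) l (𝓝 M)) :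
    Tendsto d l (𝓝 fun i => M i i) :=
  tendsto_pi_nhds.mpr fun i => by
    simpa [Function.comp_def] using ((continuous_id.matrix_elem i i).tendsto M).comp h

theorem Matrix.conjTranspose_mul_diagonal_star_mul {R m n : Type*} [Fintype m] [Fintype n]
    [DecidableEq n] [Semiring R] [StarRing R] {A B : Matrix m n R} (h : Aᴴ * B = 1)
    (d : n → R) : (A * diagonal fun i => star (d i))ᴴ * B = diagonal d := by
  rw [conjTranspose_mul, diagonal_conjTranspose, Matrix.mul_assoc, h, Matrix.mul_one]
  simp only [Pi.star_def, star_star]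

theorem mul_eq_one_of_tendsto_of_tendsto_inv {α K : Type*} [DivisionRing K] [TopologicalSpace K]
    [ContinuousMul K] [T2Space K] {l : Filter α} [l.NeBot] {x : α → K} {a b : K}
    (hx₀ : ∀ n, x n ≠ 0) (ha : Tendsto x l (𝓝 a)) (hb : Tendsto (fun n => (x n)⁻¹) l (𝓝 b)) :
    a * b = 1 :=
  tendsto_nhds_unique (ha.mul hb) (by simp only [mul_inv_cancel₀ (hx₀ _), tendsto_const_nhds])

theorem exists_bounds_of_tendsto_of_tendsto_inv {ι K : Type*} [Fintype ι] [NormedDivisionRing K]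
    {x : ℕ → ι → K} {a b : ι → K} (hx₀ : ∀ n i, x n i ≠ 0) (ha : Tendsto x atTop (𝓝 a))
    (hb : Tendsto (fun n i => (x n i)⁻¹) atTop (𝓝 b)) :
    ∃ c C : ℝ, 0 < c ∧ ∀ n i, c ≤ ‖x n i‖ ∧ ‖x n i‖ ≤ C := by
  obtain ⟨C, hC⟩ := (continuous_norm.tendsto a).comp ha |>.bddAbove_range
  obtain ⟨M, hM⟩ := (continuous_norm.tendsto b).comp hb |>.bddAbove_range
  refine ⟨(max M 1)⁻¹, C, by positivity, fun n i => ⟨?_, ?_⟩⟩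
  · have hinv : ‖x n i‖⁻¹ ≤ max M 1 := calc
      ‖x n i‖⁻¹ = ‖(x n i)⁻¹‖ := (norm_inv _).symm
      _ ≤ ‖fun j => (x n j)⁻¹‖ := norm_le_pi_norm (fun j => (x n j)⁻¹) i
      _ ≤ max M 1 := (hM ⟨n, rfl⟩).trans (le_max_left _ _)
    exact inv_le_of_inv_le₀ (norm_pos_iff.mpr (hx₀ n i)) hinv
  · exact (norm_le_pi_norm _ i).trans (hC ⟨n, rfl⟩)

theorem scaling_action_proper_step_general (p r : ℕ)
    (Ln Rn : ℕ → Matrix (Fin p) (Fin r) ℂ) (L R L' R' : Matrix (Fin p) (Fin r) ℂ)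
    (z : ℕ → Fin r → ℂ) (hz : ∀ n i, z n i ≠ 0)
    (hbio : ∀ n, (Ln n)ᴴ * (Rn n) = 1)
    (hconv : Tendsto (fun n => (Ln n, Rn n)) atTop (nhds (L, R)))
    (hconv' : Tendsto
      (fun n => (Ln n * Matrix.diagonal (fun i => star (z n i)),
                 Rn n * Matrix.diagonal (fun i => (z n i)⁻¹))) atTop (nhds (L', R'))) :
    (∃ c C : ℝ, 0 < c ∧ ∀ n i, c ≤ ‖z n i‖ ∧ ‖z n i‖ ≤ C)
    ∧ ∃ (φ : ℕ → ℕ) (w : Fin r → ℂ), StrictMono φ ∧ (∀ i, w i ≠ 0) ∧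
        Tendsto (fun n => z (φ n)) atTop (nhds w) := by
  have hz_lim : Tendsto z atTop (𝓝 fun i => (L'ᴴ * R) i i) := by
    refine Tendsto.of_matrix_diagonal ?_
    simpa only [conjTranspose_mul_diagonal_star_mul (hbio _)] using
      hconv'.fst_nhds.matrix_conjTranspose_mul hconv.snd_nhds
  have hz_inv_lim : Tendsto (fun n i => (z n i)⁻¹) atTop (𝓝 fun i => (Lᴴ * R') i i) := by
    refine Tendsto.of_matrix_diagonal ?_
    simpa only [← Matrix.mul_assoc, hbio, Matrix.one_mul] using
      hconv.fst_nhds.matrix_conjTranspose_mul hconv'.snd_nhds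
  refine ⟨exists_bounds_of_tendsto_of_tendsto_inv hz hz_lim hz_inv_lim,
    id, _, strictMono_id, fun i => ?_, hz_lim⟩
  exact left_ne_zero_of_mul_eq_one <| mul_eq_one_of_tendsto_of_tendsto_inv (hz · i)
    (tendsto_pi_nhds.mp hz_lim i) (tendsto_pi_nhds.mp hz_inv_lim i)

/-- Key step in properness of the `(ℂ*)^r` action: if `(Lₙ,Rₙ) → (L,R)` and
`(Lₙ Diag(z̄ₙ), Rₙ Diag(zₙ⁻¹)) → (L',R')`, all pairs bi-orthogonal and `zₙ` with nonzero
entries, then `(zₙ)` is (entrywise) bounded and bounded away from zero, and admits a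
subsequence converging in `(ℂ*)^r`. -/
theorem scaling_action_proper_step (p r : ℕ) (hr : 0 < r) (hrp : r < p)
    (Ln Rn : ℕ → Matrix (Fin p) (Fin r) ℂ) (L R L' R' : Matrix (Fin p) (Fin r) ℂ)
    (z : ℕ → Fin r → ℂ) (hz : ∀ n i, z n i ≠ 0)
    (hbio : ∀ n, (Ln n)ᴴ * (Rn n) = 1) (hbioL : Lᴴ * R = 1) (hbioL' : L'ᴴ * R' = 1)
    (hconv : Tendsto (fun n => (Ln n, Rn n)) atTop (nhds (L, R)))
    (hconv' : Tendsto
      (fun n => (Ln n * Matrix.diagonal (fun i => star (z n i)),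
                 Rn n * Matrix.diagonal (fun i => (z n i)⁻¹))) atTop (nhds (L', R'))) :
    (∃ c C : ℝ, 0 < c ∧ ∀ n i, c ≤ ‖z n i‖ ∧ ‖z n i‖ ≤ C)
    ∧ ∃ (φ : ℕ → ℕ) (w : Fin r → ℂ), StrictMono φ ∧ (∀ i, w i ≠ 0) ∧
        Tendsto (fun n => z (φ n)) atTop (nhds w) :=
  scaling_action_proper_step_general p r Ln Rn L R L' R' z hz hbio hconv hconv'
end

section
/- Let M, c > 0 and let R, R' ∈ ℂ^{p×r} satisfy ‖R‖_op ≤ M, ‖R'‖_op ≤ M, σ_min(R) ≥ c, σ_min(R') ≥ c. Then ‖R(R*R)⁻¹ − R'(R'*R')⁻¹‖_op ≤ c⁻²(1 + 2M²/c²)·‖R − R'‖_op. -/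
open Matrix

/-- The continuous linear map on Euclidean spaces associated to a matrix. -/
noncomputable def euclidOp {p r : ℕ} (A : Matrix (Fin p) (Fin r) ℂ) :
    EuclideanSpace ℂ (Fin r) →L[ℂ] EuclideanSpace ℂ (Fin p) :=
  LinearMap.toContinuousLinearMap (Matrix.toEuclideanLin A)

/-- The smallest singular value of a matrix, as the infimum of `‖A x‖` over unit vectors. -/
noncomputable def sigmaMin {p r : ℕ} (A : Matrix (Fin p) (Fin r) ℂ) : ℝ :=
  sInf ((fun x => ‖euclidOp A x‖) '' Metric.sphere (0 : EuclideanSpace ℂ (Fin r)) 1)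

open scoped Matrix.Norms.L2Operator

lemma sigmaMin_lower {p r : ℕ} {A : Matrix (Fin p) (Fin r) ℂ} {c : ℝ}
    (h : c ≤ sigmaMin A) (x : EuclideanSpace ℂ (Fin r)) :
    c * ‖x‖ ≤ ‖euclidOp A x‖ := by
  rcases eq_or_ne x 0 with rfl | hx
  · simp
  · have hxn : (0:ℝ) < ‖x‖ := norm_pos_iff.mpr hx
    set u : EuclideanSpace ℂ (Fin r) := ((‖x‖ : ℂ))⁻¹ • x with hu
    have hus : u ∈ Metric.sphere (0 : EuclideanSpace ℂ (Fin r)) 1 := by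
      simp only [mem_sphere_iff_norm, sub_zero, hu, norm_smul, norm_inv, Complex.norm_real,
        Real.norm_eq_abs, abs_of_pos hxn]
      exact inv_mul_cancel₀ hxn.ne'
    have hmem : ‖euclidOp A u‖ ∈
        (fun x => ‖euclidOp A x‖) '' Metric.sphere (0 : EuclideanSpace ℂ (Fin r)) 1 :=
      Set.mem_image_of_mem _ hus
    have hbdd : BddBelow ((fun x => ‖euclidOp A x‖) ''
        Metric.sphere (0 : EuclideanSpace ℂ (Fin r)) 1) :=
      ⟨0, fun y hy => by rcases hy with ⟨z, _, rfl⟩; positivity⟩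
    have h2 : c ≤ ‖euclidOp A u‖ := h.trans (csInf_le hbdd hmem)
    have hx' : euclidOp A x = (‖x‖ : ℂ) • euclidOp A u := by
      rw [hu, _root_.map_smul, smul_smul, mul_inv_cancel₀ (by exact_mod_cast hxn.ne'), one_smul]
    rw [hx', norm_smul, Complex.norm_real, Real.norm_eq_abs, abs_of_pos hxn]
    rw [mul_comm c ‖x‖] at *
    exact mul_le_mul_of_nonneg_left h2 hxn.le

lemma euclidOp_norm_eq {p r : ℕ} (A : Matrix (Fin p) (Fin r) ℂ) : ‖euclidOp A‖ = ‖A‖ := rfl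

lemma euclidOp_sub {p r : ℕ} (A B : Matrix (Fin p) (Fin r) ℂ) :
    euclidOp (A - B) = euclidOp A - euclidOp B := by
  simp [euclidOp, map_sub]

lemma euclidOp_mul {p q s : ℕ} (A : Matrix (Fin p) (Fin q) ℂ) (B : Matrix (Fin q) (Fin s) ℂ) :
    euclidOp (A * B) = (euclidOp A).comp (euclidOp B) := by
  ext x
  simp [euclidOp, Matrix.toEuclideanLin_apply, Matrix.mulVec_mulVec]

lemma gram_lower {p r : ℕ} {A : Matrix (Fin p) (Fin r) ℂ} {c : ℝ} (hc : 0 < c)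
    (h : c ≤ sigmaMin A) (x : EuclideanSpace ℂ (Fin r)) :
    c ^ 2 * ‖x‖ ≤ ‖euclidOp (Aᴴ * A) x‖ := by
  have key : c ^ 2 * ‖x‖ ^ 2 ≤ ‖euclidOp (Aᴴ * A) x‖ * ‖x‖ := by
    have h1 : (inner ℂ (euclidOp (Aᴴ * A) x) x : ℂ) = inner ℂ (euclidOp A x) (euclidOp A x) := by
      have : euclidOp (Aᴴ * A) x = Matrix.toEuclideanLin Aᴴ (Matrix.toEuclideanLin A x) := by
        rw [euclidOp_mul]; rfl
      rw [this, Matrix.toEuclideanLin_conjTranspose_eq_adjoint, LinearMap.adjoint_inner_left]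
      rfl
    have h2 : ‖euclidOp A x‖ ^ 2 = ‖(inner ℂ (euclidOp (Aᴴ * A) x) x : ℂ)‖ := by
      rw [h1, inner_self_eq_norm_sq_to_K]
      simp [Complex.norm_real]
    have h3 : ‖(inner ℂ (euclidOp (Aᴴ * A) x) x : ℂ)‖ ≤ ‖euclidOp (Aᴴ * A) x‖ * ‖x‖ :=
      norm_inner_le_norm _ _
    have h4 : c * ‖x‖ ≤ ‖euclidOp A x‖ := sigmaMin_lower h x
    have h5 : (c * ‖x‖) ^ 2 ≤ ‖euclidOp A x‖ ^ 2 := pow_le_pow_left₀ (by positivity) h4 2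
    nlinarith [h5]
  rcases eq_or_ne x 0 with rfl | hx
  · simp
  · have hxn : (0:ℝ) < ‖x‖ := norm_pos_iff.mpr hx
    nlinarith

lemma gram_isUnit {p r : ℕ} {A : Matrix (Fin p) (Fin r) ℂ} {c : ℝ} (hc : 0 < c)
    (h : c ≤ sigmaMin A) : IsUnit (Aᴴ * A) := by
  rw [← Matrix.mulVec_injective_iff_isUnit]
  intro v w hvw
  have h0 : (Aᴴ * A) *ᵥ (v - w) = 0 := by
    rw [Matrix.mulVec_sub, hvw, sub_self]
  set x : EuclideanSpace ℂ (Fin r) := (WithLp.equiv 2 _).symm (v - w) with hx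
  have hEx : euclidOp (Aᴴ * A) x = 0 := by
    simp [euclidOp, hx, Matrix.toEuclideanLin_apply, h0]
  have := gram_lower hc h x
  rw [hEx, norm_zero] at this
  have hxz : ‖x‖ = 0 := le_antisymm (by nlinarith [pow_pos hc 2]) (norm_nonneg x)
  have : x = 0 := norm_eq_zero.mp hxz
  have hvweq : v - w = 0 := by
    simpa [hx] using congrArg (WithLp.equiv 2 (Fin r → ℂ)) this
  exact sub_eq_zero.mp hvweq

lemma gram_inv_norm_le {p r : ℕ} {A : Matrix (Fin p) (Fin r) ℂ} {c : ℝ} (hc : 0 < c)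
    (h : c ≤ sigmaMin A) : ‖(Aᴴ * A)⁻¹‖ ≤ (c ^ 2)⁻¹ := by
  have hdet : IsUnit (Aᴴ * A).det := (Matrix.isUnit_iff_isUnit_det _).mp (gram_isUnit hc h)
  have hSS : (Aᴴ * A) * (Aᴴ * A)⁻¹ = 1 := Matrix.mul_nonsing_inv _ hdet
  rw [← euclidOp_norm_eq]
  apply ContinuousLinearMap.opNorm_le_bound _ (by positivity)
  intro y
  set z := euclidOp (Aᴴ * A)⁻¹ y with hz
  have hyz : euclidOp (Aᴴ * A) z = y := by
    have : (euclidOp (Aᴴ * A)).comp (euclidOp (Aᴴ * A)⁻¹) = euclidOp (1 : Matrix (Fin r) (Fin r) ℂ) := by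
      rw [← euclidOp_mul, hSS]
    have h1 : euclidOp (1 : Matrix (Fin r) (Fin r) ℂ) y = y := by
      simp [euclidOp, Matrix.toEuclideanLin_apply]
    calc euclidOp (Aᴴ * A) z = ((euclidOp (Aᴴ * A)).comp (euclidOp (Aᴴ * A)⁻¹)) y := rfl
      _ = y := by rw [this, h1]
  have hlow := gram_lower hc h z
  rw [hyz] at hlow
  have hc2 : (0:ℝ) < c ^ 2 := by positivity
  calc ‖z‖ = (c ^ 2)⁻¹ * (c ^ 2 * ‖z‖) := by field_simp
    _ ≤ (c ^ 2)⁻¹ * ‖y‖ := by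
        exact mul_le_mul_of_nonneg_left hlow (by positivity)

/-- Lipschitz bound for `R ↦ R (RᴴR)⁻¹` on matrices with bounded operator norm and
smallest singular value bounded below:
`‖R(RᴴR)⁻¹ − R'(R'ᴴR')⁻¹‖_op ≤ c⁻² (1 + 2M²/c²) ‖R − R'‖_op`. -/
theorem pseudoinverse_lipschitz (p r : ℕ) (hrp : r ≤ p)
    (M c : ℝ) (hM : 0 < M) (hc : 0 < c)
    (R R' : Matrix (Fin p) (Fin r) ℂ)
    (hRM : ‖euclidOp R‖ ≤ M) (hR'M : ‖euclidOp R'‖ ≤ M)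
    (hRc : c ≤ sigmaMin R) (hR'c : c ≤ sigmaMin R') :
    ‖euclidOp (R * (Rᴴ * R)⁻¹) - euclidOp (R' * (R'ᴴ * R')⁻¹)‖
      ≤ c⁻¹ ^ 2 * (1 + 2 * M ^ 2 / c ^ 2) * ‖euclidOp (R - R')‖ := by
  rw [← euclidOp_sub, euclidOp_norm_eq, euclidOp_norm_eq] at *
  set S := Rᴴ * R with hS
  set S' := R'ᴴ * R' with hS'
  have hSdet : IsUnit S.det := (Matrix.isUnit_iff_isUnit_det _).mp (gram_isUnit hc hRc)
  have hS'det : IsUnit S'.det := (Matrix.isUnit_iff_isUnit_det _).mp (gram_isUnit hc hR'c)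
  have hSinv : ‖S⁻¹‖ ≤ (c ^ 2)⁻¹ := gram_inv_norm_le hc hRc
  have hS'inv : ‖S'⁻¹‖ ≤ (c ^ 2)⁻¹ := gram_inv_norm_le hc hR'c
  have hres : S⁻¹ - S'⁻¹ = S⁻¹ * (S' - S) * S'⁻¹ := by
    rw [Matrix.mul_sub, Matrix.sub_mul, Matrix.mul_assoc S⁻¹ S' S'⁻¹,
      Matrix.mul_nonsing_inv _ hS'det, Matrix.nonsing_inv_mul _ hSdet,
      Matrix.mul_one, Matrix.one_mul]
  have hdec : R * S⁻¹ - R' * S'⁻¹ = (R - R') * S⁻¹ + R' * (S⁻¹ - S'⁻¹) := by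
    rw [Matrix.sub_mul, Matrix.mul_sub]; abel
  have hgram : S' - S = R'ᴴ * (R' - R) + (R' - R)ᴴ * R := by
    rw [Matrix.conjTranspose_sub, hS, hS', Matrix.mul_sub, Matrix.sub_mul]; abel
  set D := ‖R - R'‖ with hD
  have hD0 : 0 ≤ D := norm_nonneg _
  have hgramnorm : ‖S' - S‖ ≤ 2 * M * D := by
    calc ‖S' - S‖ ≤ ‖R'ᴴ * (R' - R)‖ + ‖(R' - R)ᴴ * R‖ := by
          rw [hgram]; exact norm_add_le _ _
      _ ≤ ‖R'ᴴ‖ * ‖R' - R‖ + ‖(R' - R)ᴴ‖ * ‖R‖ :=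
          add_le_add (Matrix.l2_opNorm_mul _ _) (Matrix.l2_opNorm_mul _ _)
      _ = ‖R'‖ * D + D * ‖R‖ := by
          rw [Matrix.l2_opNorm_conjTranspose, Matrix.l2_opNorm_conjTranspose, norm_sub_rev]
      _ ≤ M * D + D * M := by
          have h1 : ‖R'‖ * D ≤ M * D := mul_le_mul_of_nonneg_right hR'M hD0
          have h2 : D * ‖R‖ ≤ D * M := mul_le_mul_of_nonneg_left hRM hD0
          linarith
      _ = 2 * M * D := by ring
  have hc2 : (0:ℝ) < (c ^ 2)⁻¹ := by positivity
  have hdiffinv : ‖S⁻¹ - S'⁻¹‖ ≤ (c ^ 2)⁻¹ * (2 * M * D) * (c ^ 2)⁻¹ := by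
    rw [hres]
    calc ‖S⁻¹ * (S' - S) * S'⁻¹‖ ≤ ‖S⁻¹ * (S' - S)‖ * ‖S'⁻¹‖ := Matrix.l2_opNorm_mul _ _
      _ ≤ ‖S⁻¹‖ * ‖S' - S‖ * ‖S'⁻¹‖ :=
          mul_le_mul_of_nonneg_right (Matrix.l2_opNorm_mul _ _) (norm_nonneg _)
      _ ≤ (c ^ 2)⁻¹ * (2 * M * D) * (c ^ 2)⁻¹ := by
          have h1 : ‖S⁻¹‖ * ‖S' - S‖ ≤ (c ^ 2)⁻¹ * (2 * M * D) :=
            mul_le_mul hSinv hgramnorm (norm_nonneg _) hc2.le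
          exact mul_le_mul h1 hS'inv (norm_nonneg _) (by positivity)
  have hmain : ‖R * S⁻¹ - R' * S'⁻¹‖ ≤ D * (c ^ 2)⁻¹ + M * ((c ^ 2)⁻¹ * (2 * M * D) * (c ^ 2)⁻¹) := by
    rw [hdec]
    calc ‖(R - R') * S⁻¹ + R' * (S⁻¹ - S'⁻¹)‖
        ≤ ‖(R - R') * S⁻¹‖ + ‖R' * (S⁻¹ - S'⁻¹)‖ := norm_add_le _ _
      _ ≤ ‖R - R'‖ * ‖S⁻¹‖ + ‖R'‖ * ‖S⁻¹ - S'⁻¹‖ :=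
          add_le_add (Matrix.l2_opNorm_mul _ _) (Matrix.l2_opNorm_mul _ _)
      _ ≤ D * (c ^ 2)⁻¹ + M * ((c ^ 2)⁻¹ * (2 * M * D) * (c ^ 2)⁻¹) := by
          have h1 : ‖R - R'‖ * ‖S⁻¹‖ ≤ D * (c ^ 2)⁻¹ :=
            mul_le_mul_of_nonneg_left hSinv hD0
          have h2 : ‖R'‖ * ‖S⁻¹ - S'⁻¹‖ ≤ M * ((c ^ 2)⁻¹ * (2 * M * D) * (c ^ 2)⁻¹) :=
            mul_le_mul hR'M hdiffinv (norm_nonneg _) hM.le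
          linarith
  have heq : c⁻¹ ^ 2 * (1 + 2 * M ^ 2 / c ^ 2) * D
      = D * (c ^ 2)⁻¹ + M * ((c ^ 2)⁻¹ * (2 * M * D) * (c ^ 2)⁻¹) := by
    field_simp
  linarith [hmain]
end
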